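/- Let m ≥ 1 and let x_1, …, x_n be a finite sequence taking values in the ordered alphabet {1, …, m}. With a^r_k the number of indices 1 ≤ i ≤ k with x_i = r, and S^r_k := a^r_k − a^{r+1}_k, the length LI_n of the longest weakly increasing subsequence satisfies the exact (rational-valued) identity LI_n = n/m − (1/m) ∑_{r=1}^{m−1} r·S^r_n + max over all integers 0 ≤ k_1 ≤ k_2 ≤ ⋯ ≤ k_{m−1} ≤ n of (S^1_{k_1} + S^2_{k_2} + ⋯ + S^{m−1}_{k_{m−1}}). -/

import Mathlib

/-- The length of the longest weakly increasing subsequence of a list of naturals. -/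
noncomputable def LIS (l : List ℕ) : ℕ :=
  sSup {k | ∃ s : List ℕ, s.Sublist l ∧ s.Pairwise (· ≤ ·) ∧ s.length = k}

/-- `cnt x r k` is the number of indices `1 ≤ i ≤ k` with `x i = r`. -/
def cnt (x : ℕ → ℕ) (r k : ℕ) : ℕ :=
  ((Finset.Icc 1 k).filter fun i => x i = r).card

/-- `Scnt x r k = a^r_k − a^{r+1}_k` (as an integer). -/
def Scnt (x : ℕ → ℕ) (r k : ℕ) : ℤ :=
  (cnt x r k : ℤ) - (cnt x (r + 1) k : ℤ)

namespace Stmt3Aux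

lemma cnt_zero (x : ℕ → ℕ) (r : ℕ) : cnt x r 0 = 0 := by
  simp [cnt]

lemma cnt_succ (x : ℕ → ℕ) (r t : ℕ) :
    cnt x r (t + 1) = cnt x r t + if x (t + 1) = r then 1 else 0 := by
  unfold cnt
  have h : Finset.Icc 1 (t + 1) = insert (t + 1) (Finset.Icc 1 t) := by
    ext i; simp [Finset.mem_Icc]; omega
  rw [h, Finset.filter_insert]
  have hnot : t + 1 ∉ (Finset.Icc 1 t).filter fun i => x i = r := by
    simp [Finset.mem_Icc]
  split
  · rw [Finset.card_insert_of_notMem hnot]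
  · simp

lemma take_map_range' (x : ℕ → ℕ) (n t : ℕ) (ht : t ≤ n) :
    ((List.range' 1 n).map x).take t = (List.range' 1 t).map x := by
  have h : List.range' 1 t ++ List.range' (1 + 1 * t) (n - t) = List.range' 1 n := by
    rw [List.range'_append]
    congr 1
    omega
  rw [← h, List.map_append, List.take_left' (by simp)]

lemma count_map_range' (x : ℕ → ℕ) (r t : ℕ) :
    ((List.range' 1 t).map x).count r = cnt x r t := by
  induction t with
  | zero => simp [cnt_zero]
  | succ t ih =>
    have h : List.range' 1 (t + 1) = List.range' 1 t ++ [1 + t] := by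
      simpa using List.range'_concat (step := 1) (s := 1) (n := t)
    rw [h, List.map_append, List.count_append, ih, cnt_succ]
    congr 1
    rw [show 1 + t = t + 1 by omega]
    by_cases hxr : x (t + 1) = r <;> simp [hxr, List.count_cons]

lemma count_take_eq_cnt (x : ℕ → ℕ) (n r t : ℕ) (ht : t ≤ n) :
    (((List.range' 1 n).map x).take t).count r = cnt x r t := by
  rw [take_map_range' x n t ht, count_map_range']

lemma take_split (l : List ℕ) (a b : ℕ) (hab : a ≤ b) :
    l.take b = l.take a ++ (l.take b).drop a := by
  conv_lhs => rw [← List.take_append_drop a (l.take b)]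
  rw [List.take_take, inf_eq_left.mpr hab]

lemma drop_split (l : List ℕ) (a b : ℕ) (hab : a ≤ b) (hb : b ≤ l.length) :
    l.drop a = (l.take b).drop a ++ l.drop b := by
  calc l.drop a = (l.take b ++ l.drop b).drop a := by rw [List.take_append_drop]
    _ = (l.take b).drop a ++ l.drop b := by
        apply List.drop_append_of_le_length
        rw [List.length_take]
        omega

lemma count_take_add (l : List ℕ) (i a b : ℕ) (hab : a ≤ b) :
    ((l.take b).count i : ℤ) = (l.take a).count i + ((l.take b).drop a).count i := by
  conv_lhs => rw [take_split l a b hab]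
  rw [List.count_append]
  push_cast
  ring

/-- Lower bound: from monotone cut points, build a sorted sublist realizing the sum. -/
lemma lb (l : List ℕ) (c : ℕ → ℕ) (hc : Monotone c) (hcl : ∀ i, c i ≤ l.length) :
    ∀ j r, ∃ s : List ℕ, s.Sublist (l.drop (c r)) ∧ s.Pairwise (· ≤ ·) ∧
      (∀ a ∈ s, r + 1 ≤ a) ∧
      (∑ i ∈ Finset.range j,
        (((l.take (c (r + i + 1))).count (r + i + 1) : ℤ) -
          ((l.take (c (r + i))).count (r + i + 1) : ℤ))) ≤ (s.length : ℤ) := by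
  intro j
  induction j with
  | zero =>
    intro r
    exact ⟨[], List.nil_sublist _, List.Pairwise.nil, by simp, by simp⟩
  | succ j ih =>
    intro r
    obtain ⟨s', hsub', hsort', hmem', hlen'⟩ := ih (r + 1)
    set b := ((l.take (c (r + 1))).drop (c r)).filter (· == r + 1) with hb
    have hbmem : ∀ a ∈ b, a = r + 1 := by
      intro a ha
      have := (List.mem_filter.1 ha).2
      simpa using this
    refine ⟨b ++ s', ?_, ?_, ?_, ?_⟩
    · rw [drop_split l (c r) (c (r + 1)) (hc (by omega)) (hcl _)]
      exact List.filter_sublist.append hsub'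
    · rw [List.pairwise_append]
      refine ⟨List.pairwise_of_forall_mem_list ?_, hsort', ?_⟩
      · intro a ha a' ha'; rw [hbmem a ha, hbmem a' ha']
      · intro a ha a' ha'
        have h1 := hbmem a ha
        have h2 := hmem' a' ha'
        omega
    · intro a ha
      rcases List.mem_append.1 ha with h | h
      · have := hbmem a h; omega
      · have := hmem' a h; omega
    · rw [Finset.sum_range_succ']
      have hsum' : (∑ i ∈ Finset.range j,
          (((l.take (c (r + (i + 1) + 1))).count (r + (i + 1) + 1) : ℤ) -
            ((l.take (c (r + (i + 1)))).count (r + (i + 1) + 1) : ℤ)))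
          = ∑ i ∈ Finset.range j,
          (((l.take (c ((r + 1) + i + 1))).count ((r + 1) + i + 1) : ℤ) -
            ((l.take (c ((r + 1) + i))).count ((r + 1) + i + 1) : ℤ)) := by
        refine Finset.sum_congr rfl fun i _ => ?_
        rw [show r + (i + 1) + 1 = (r + 1) + i + 1 by omega,
          show r + (i + 1) = (r + 1) + i by omega]
      rw [hsum']
      have hlenb : (b.length : ℤ) =
          ((l.take (c (r + 0 + 1))).count (r + 0 + 1) : ℤ) -
            ((l.take (c (r + 0))).count (r + 0 + 1) : ℤ) := by
        have hslice := count_take_add l (r + 1) (c r) (c (r + 1)) (hc (by omega))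
        have hcount : (b.length : ℤ) = (((l.take (c (r + 1))).drop (c r)).count (r + 1) : ℤ) := by
          rw [hb, List.count_eq_countP, List.countP_eq_length_filter]
        simp only [Nat.add_zero]
        rw [hcount]
        omega
      rw [List.length_append]
      push_cast
      omega

lemma dropWhile_head_false (p : ℕ → Bool) : ∀ (l : List ℕ) (a : ℕ) (t : List ℕ),
    l.dropWhile p = a :: t → p a = false := by
  intro l
  induction l with
  | nil => intro a t h; simp at h
  | cons y ys ih =>
    intro a t h
    rw [List.dropWhile_cons] at h
    by_cases hy : p y
    · rw [if_pos hy] at h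
      exact ih a t h
    · rw [if_neg hy] at h
      injection h with h1 h2
      rw [← h1]
      simpa using hy

/-- Upper bound: from a sorted sublist with values in a window, extract cut points. -/
lemma ub : ∀ j r (l s : List ℕ), s.Sublist l → s.Pairwise (· ≤ ·) →
    (∀ a ∈ s, r + 1 ≤ a ∧ a ≤ r + 1 + j) →
    ∃ c : ℕ → ℕ, Monotone c ∧ c r = 0 ∧ (∀ i, r + 1 + j ≤ i → c i = l.length) ∧
      (s.length : ℤ) ≤ ∑ i ∈ Finset.range (j + 1),
        (((l.take (c (r + i + 1))).count (r + i + 1) : ℤ) -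
          ((l.take (c (r + i))).count (r + i + 1) : ℤ)) := by
  intro j
  induction j with
  | zero =>
    intro r l s hsub hsort hmem
    set c : ℕ → ℕ := fun i => if i ≤ r then 0 else l.length with hc
    have hcr : c r = 0 := by simp [hc]
    have hctop : ∀ i, r + 1 ≤ i → c i = l.length := by
      intro i hi
      simp only [hc]
      rw [if_neg (by omega)]
    refine ⟨c, ?_, hcr, fun i hi => hctop i (by omega), ?_⟩
    · intro a b hab
      simp only [hc]
      split <;> split <;> omega
    · rw [Finset.sum_range_one]
      simp only [Nat.add_zero]
      rw [hctop (r + 1) (by omega), hcr]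
      simp only [List.take_length, List.take_zero, List.count_nil]
      have hcs : s.count (r + 1) = s.length := by
        rw [List.count_eq_length]
        intro b hb
        have := hmem b hb
        omega
      have := hsub.count_le (r + 1)
      omega
  | succ j ih =>
    intro r l s hsub hsort hmem
    set p : ℕ → Bool := (· == r + 1) with hp
    set s₁ := s.takeWhile p with hs₁
    set s₂ := s.dropWhile p with hs₂
    have hs12 : s₁ ++ s₂ = s := List.takeWhile_append_dropWhile
    have hsub' : (s₁ ++ s₂).Sublist l := by rw [hs12]; exact hsub
    obtain ⟨l₁, l₂, hl, hsub₁, hsub₂⟩ := List.append_sublist_iff.1 hsub'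
    have hs₁mem : ∀ a ∈ s₁, a = r + 1 := by
      intro a ha
      have := List.mem_takeWhile_imp ha
      simpa [hp] using this
    have hs₂s : s₂.Sublist s := List.dropWhile_sublist p
    have hs₂sort : s₂.Pairwise (· ≤ ·) := hsort.sublist hs₂s
    have hs₂mem : ∀ a ∈ s₂, (r + 1) + 1 ≤ a ∧ a ≤ (r + 1) + 1 + j := by
      intro a' ha'
      have hup : a' ≤ (r + 1) + 1 + j := by
        have := (hmem a' (hs₂s.subset ha')).2
        omega
      refine ⟨?_, hup⟩
      rcases hd : s₂ with _ | ⟨a, t⟩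
      · rw [hd] at ha'; simp at ha'
      · have hpa : p a = false := dropWhile_head_false p s a t (by rw [← hs₂]; exact hd)
        have hane : a ≠ r + 1 := by simpa [hp] using hpa
        have hamem : a ∈ s := hs₂s.subset (by rw [hd]; exact List.mem_cons_self)
        have ha1 := (hmem a hamem).1
        have hsorted2 : (a :: t).Pairwise (· ≤ ·) := by rw [← hd]; exact hs₂sort
        rw [hd] at ha'
        rcases List.mem_cons.1 ha' with rfl | hat
        · omega
        · have hle : a ≤ a' := (List.pairwise_cons.1 hsorted2).1 a' hat
          omega
    obtain ⟨c', hc'mono, hc'base, hc'top, hlen₂⟩ := ih (r + 1) l₂ s₂ hsub₂ hs₂sort hs₂mem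
    set c : ℕ → ℕ := fun i => if i ≤ r then 0 else l₁.length + c' i with hc
    have hcr : c r = 0 := by simp [hc]
    have hcval : ∀ i, r + 1 ≤ i → c i = l₁.length + c' i := by
      intro i hi
      simp only [hc]
      rw [if_neg (by omega)]
    refine ⟨c, ?_, hcr, ?_, ?_⟩
    · intro a b hab
      simp only [hc]
      split <;> split
      · omega
      · omega
      · omega
      · exact Nat.add_le_add_left (hc'mono hab) _
    · intro i hi
      rw [hcval i (by omega), hc'top i (by omega), hl, List.length_append]
    · rw [Finset.sum_range_succ']
      have hsum' : (∑ i ∈ Finset.range (j + 1),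
          (((l.take (c (r + (i + 1) + 1))).count (r + (i + 1) + 1) : ℤ) -
            ((l.take (c (r + (i + 1)))).count (r + (i + 1) + 1) : ℤ)))
          = ∑ i ∈ Finset.range (j + 1),
          (((l₂.take (c' ((r + 1) + i + 1))).count ((r + 1) + i + 1) : ℤ) -
            ((l₂.take (c' ((r + 1) + i))).count ((r + 1) + i + 1) : ℤ)) := by
        refine Finset.sum_congr rfl fun i _ => ?_
        rw [show r + (i + 1) + 1 = (r + 1) + i + 1 by omega,
          show r + (i + 1) = (r + 1) + i by omega,
          hcval ((r + 1) + i + 1) (by omega), hcval ((r + 1) + i) (by omega),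
          hl, List.take_append, List.take_append, List.count_append, List.count_append]
        simp only [Nat.add_sub_cancel_left, List.take_of_length_le, Nat.le_add_right]
        push_cast
        ring
      rw [hsum']
      have hf0 : ((l.take (c (r + 0 + 1))).count (r + 0 + 1) : ℤ) -
          ((l.take (c (r + 0))).count (r + 0 + 1) : ℤ) = (l₁.count (r + 1) : ℤ) := by
        simp only [Nat.add_zero]
        rw [hcval (r + 1) (by omega), hc'base, hcr, hl]
        simp [List.take_left]
      rw [hf0]
      have hs₁len : (s₁.length : ℤ) ≤ (l₁.count (r + 1) : ℤ) := by
        have hcs : s₁.count (r + 1) = s₁.length := by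
          rw [List.count_eq_length]
          intro b hb
          exact (hs₁mem b hb).symm
        have := hsub₁.count_le (r + 1)
        omega
      have hslen : s.length = s₁.length + s₂.length := by
        rw [← hs12, List.length_append]
      omega

/-- Telescoping identity. -/
lemma telescope (B : ℕ → ℕ → ℤ) :
    ∀ j, ∑ i ∈ Finset.range (j + 1), (B (i + 1) (i + 1) - B (i + 1) i) =
      B (j + 1) (j + 1) - B 1 0 +
        ∑ i ∈ Finset.range j, (B (i + 1) (i + 1) - B (i + 2) (i + 1)) := by
  intro j
  induction j with
  | zero => simp
  | succ j ih =>
    rw [Finset.sum_range_succ, ih, Finset.sum_range_succ (f := fun i => B (i + 1) (i + 1) - B (i + 2) (i + 1))]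
    ring

/-- Abel summation. -/
lemma abelsum (B : ℕ → ℤ) :
    ∀ j : ℕ, ∑ r ∈ Finset.Icc 1 j, (r : ℤ) * (B r - B (r + 1)) =
      (∑ r ∈ Finset.Icc 1 (j + 1), B r) - ((j : ℤ) + 1) * B (j + 1) := by
  intro j
  induction j with
  | zero => simp
  | succ j ih =>
    rw [Finset.sum_Icc_succ_top (by omega) (fun r : ℕ => (r : ℤ) * (B r - B (r + 1))), ih,
      Finset.sum_Icc_succ_top (a := 1) (b := j + 1) (by omega) B]
    push_cast
    ring

end Stmt3Aux

open Stmt3Aux in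
/-- the exact rational-valued identity
`LI_n = n/m − (1/m) ∑_{r=1}^{m−1} r·S^r_n
  + max_{0 ≤ k_1 ≤ ⋯ ≤ k_{m−1} ≤ n} (S^1_{k_1} + ⋯ + S^{m−1}_{k_{m−1}})`. -/
theorem stmt3 (m n : ℕ) (hm : 1 ≤ m) (x : ℕ → ℕ)
    (hx : ∀ i, 1 ≤ i → i ≤ n → x i ∈ Finset.Icc 1 m) :
    (LIS ((List.range' 1 n).map x) : ℚ) =
      (n : ℚ) / m - (1 / m) * (∑ r ∈ Finset.Icc 1 (m - 1), (r : ℚ) * (Scnt x r n : ℚ)) +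
        ((sSup {S : ℤ | ∃ k : ℕ → ℕ, Monotone k ∧ k (m - 1) ≤ n ∧
          S = ∑ r ∈ Finset.Icc 1 (m - 1), Scnt x r (k r)} : ℤ) : ℚ) := by
  set L := (List.range' 1 n).map x with hL
  have hLlen : L.length = n := by simp [hL]
  set K := {k | ∃ s : List ℕ, s.Sublist L ∧ s.Pairwise (· ≤ ·) ∧ s.length = k} with hK
  have hKne : K.Nonempty := ⟨0, [], List.nil_sublist _, List.Pairwise.nil, rfl⟩
  have hKbdd : BddAbove K := by
    refine ⟨n, fun k hk => ?_⟩
    obtain ⟨s, hs1, _, hs3⟩ := hk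
    have := hs1.length_le
    omega
  have hLIS : LIS L = sSup K := rfl
  set T := {S : ℤ | ∃ k : ℕ → ℕ, Monotone k ∧ k (m - 1) ≤ n ∧
      S = ∑ r ∈ Finset.Icc 1 (m - 1), Scnt x r (k r)} with hT
  set A : ℤ := (cnt x m n : ℤ) with hA
  have hm1 : m - 1 + 1 = m := by omega
  -- convert Icc sums to range sums
  have hIccRange : ∀ (f : ℕ → ℤ), ∑ r ∈ Finset.Icc 1 (m - 1), f r
      = ∑ i ∈ Finset.range (m - 1), f (i + 1) := by
    intro f
    rw [← Finset.Ico_add_one_right_eq_Icc, Finset.sum_Ico_eq_sum_range]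
    refine Finset.sum_congr (by rw [show m - 1 + 1 - 1 = m - 1 by omega]) fun i _ => by
      rw [Nat.add_comm 1 i]
  -- Claim 1: every element of T is at most LIS L - A
  have claim1 : ∀ z ∈ T, A + z ≤ (LIS L : ℤ) := by
    intro z hz
    obtain ⟨k, hkmono, hkn, hzeq⟩ := hz
    set c : ℕ → ℕ := fun i => if i = 0 then 0 else if i ≤ m - 1 then k i else n with hc
    have hcle : ∀ i, c i ≤ n := by
      intro i
      simp only [hc]
      split
      · exact Nat.zero_le _
      · split
        · exact le_trans (hkmono (by omega)) hkn
        · exact le_rfl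
    have hcmono : Monotone c := by
      intro a b hab
      rcases Nat.eq_zero_or_pos a with rfl | ha
      · have h0 : c 0 = 0 := by simp [hc]
        rw [h0]
        exact Nat.zero_le _
      · rcases le_or_gt b (m - 1) with hb | hb
        · have h1 : c a = k a := by
            simp only [hc]
            rw [if_neg (by omega), if_pos (by omega)]
          have h2 : c b = k b := by
            simp only [hc]
            rw [if_neg (by omega), if_pos hb]
          rw [h1, h2]
          exact hkmono hab
        · have h2 : c b = n := by
            simp only [hc]
            rw [if_neg (by omega), if_neg (by omega)]
          rw [h2]
          exact hcle a
    obtain ⟨s, hssub, hssort, _, hslen⟩ := lb L c hcmono (fun i => by rw [hLlen]; exact hcle i)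
      m 0
    have hc0 : c 0 = 0 := by simp [hc]
    rw [hc0, List.drop_zero] at hssub
    have hsK : s.length ∈ K := ⟨s, hssub, hssort, rfl⟩
    have hsle : s.length ≤ LIS L := by rw [hLIS]; exact le_csSup hKbdd hsK
    -- compute the sum
    have hsum : ∑ i ∈ Finset.range m,
        (((L.take (c (0 + i + 1))).count (0 + i + 1) : ℤ) -
          ((L.take (c (0 + i))).count (0 + i + 1) : ℤ)) = A + z := by
      have hBsum : ∀ i ∈ Finset.range m,
          (((L.take (c (0 + i + 1))).count (0 + i + 1) : ℤ) -
            ((L.take (c (0 + i))).count (0 + i + 1) : ℤ)) =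
          ((cnt x (i + 1) (c (i + 1)) : ℤ) - (cnt x (i + 1) (c i) : ℤ)) := by
        intro i _
        simp only [Nat.zero_add]
        rw [count_take_eq_cnt x n _ _ (hcle _), count_take_eq_cnt x n _ _ (hcle _)]
      rw [Finset.sum_congr rfl hBsum]
      have htel := telescope (fun a b => (cnt x a (c b) : ℤ)) (m - 1)
      rw [hm1] at htel
      rw [htel]
      have hcm : c m = n := by
        simp only [hc]
        rw [if_neg (by omega), if_neg (by omega)]
      have hc0' : c 0 = 0 := by simp [hc]
      rw [hcm, hc0', cnt_zero]
      have hrest : ∑ i ∈ Finset.range (m - 1),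
          ((cnt x (i + 1) (c (i + 1)) : ℤ) - (cnt x (i + 2) (c (i + 1)) : ℤ)) = z := by
        rw [hzeq, hIccRange]
        refine Finset.sum_congr rfl fun i hi => ?_
        have him : i + 1 ≤ m - 1 := by
          have := Finset.mem_range.1 hi; omega
        have hci : c (i + 1) = k (i + 1) := by
          simp only [hc]
          rw [if_neg (by omega), if_pos him]
        rw [Scnt, hci]
      rw [hrest]
      simp [hA]
    rw [hsum] at hslen
    omega
  -- Claim 2: LIS L - A is in T
  have claim2 : (LIS L : ℤ) - A ∈ T := by
    obtain ⟨s, hssub, hssort, hslen⟩ := Nat.sSup_mem hKne hKbdd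
    have hsmem : ∀ a ∈ s, 0 + 1 ≤ a ∧ a ≤ 0 + 1 + (m - 1) := by
      intro a ha
      have haL : a ∈ L := hssub.subset ha
      rw [hL] at haL
      obtain ⟨i, hi, rfl⟩ := List.mem_map.1 haL
      rw [List.mem_range'_1] at hi
      have := hx i (by omega) (by omega)
      rw [Finset.mem_Icc] at this
      omega
    obtain ⟨c, hcmono, hc0, hctop, hlen⟩ := ub (m - 1) 0 L s hssub hssort hsmem
    have hcle : ∀ i, c i ≤ n := by
      intro i
      rcases le_or_gt (0 + 1 + (m - 1)) i with h | h
      · rw [hctop i h, hLlen]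
      · calc c i ≤ c (0 + 1 + (m - 1)) := hcmono (by omega)
          _ = n := by rw [hctop _ le_rfl, hLlen]
    set k : ℕ → ℕ := fun i => c (min i (m - 1)) with hk
    have hkmono : Monotone k := fun a b hab => hcmono (min_le_min hab le_rfl)
    have hkn : k (m - 1) ≤ n := by
      simp only [hk]
      rw [min_self]
      exact hcle _
    set z : ℤ := ∑ r ∈ Finset.Icc 1 (m - 1), Scnt x r (k r) with hz
    have hzT : z ∈ T := ⟨k, hkmono, hkn, rfl⟩
    -- LIS ≤ A + z
    have hsum : ∑ i ∈ Finset.range (m - 1 + 1),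
        (((L.take (c (0 + i + 1))).count (0 + i + 1) : ℤ) -
          ((L.take (c (0 + i))).count (0 + i + 1) : ℤ)) = A + z := by
      have hBsum : ∀ i ∈ Finset.range (m - 1 + 1),
          (((L.take (c (0 + i + 1))).count (0 + i + 1) : ℤ) -
            ((L.take (c (0 + i))).count (0 + i + 1) : ℤ)) =
          ((cnt x (i + 1) (c (i + 1)) : ℤ) - (cnt x (i + 1) (c i) : ℤ)) := by
        intro i _
        simp only [Nat.zero_add]
        rw [count_take_eq_cnt x n _ _ (hcle _), count_take_eq_cnt x n _ _ (hcle _)]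
      rw [Finset.sum_congr rfl hBsum]
      have htel := telescope (fun a b => (cnt x a (c b) : ℤ)) (m - 1)
      rw [htel, hm1]
      have hcm : c m = n := by
        have : c (0 + 1 + (m - 1)) = L.length := hctop _ le_rfl
        rw [hLlen] at this
        rw [show m = 0 + 1 + (m - 1) by omega]
        exact this
      rw [hcm, hc0, cnt_zero]
      have hrest : ∑ i ∈ Finset.range (m - 1),
          ((cnt x (i + 1) (c (i + 1)) : ℤ) - (cnt x (i + 2) (c (i + 1)) : ℤ)) = z := by
        rw [hz, hIccRange]
        refine Finset.sum_congr rfl fun i hi => ?_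
        have him : i + 1 ≤ m - 1 := by
          have := Finset.mem_range.1 hi; omega
        have hki : k (i + 1) = c (i + 1) := by
          simp only [hk]
          rw [min_eq_left him]
        rw [Scnt, hki]
      rw [hrest]
      simp [hA]
    rw [hsum] at hlen
    rw [hslen, ← hLIS] at hlen
    have h1 := claim1 z hzT
    have : z = (LIS L : ℤ) - A := by omega
    rw [← this]
    exact hzT
  -- sSup T = LIS L - A
  have hTne : T.Nonempty := ⟨(LIS L : ℤ) - A, claim2⟩
  have hTbdd : BddAbove T := ⟨(LIS L : ℤ) - A, fun z hz => by have := claim1 z hz; omega⟩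
  have hsup : sSup T = (LIS L : ℤ) - A := by
    apply le_antisymm
    · exact csSup_le hTne fun z hz => by have := claim1 z hz; omega
    · exact le_csSup hTbdd claim2
  -- Abel: ∑ r·Scnt r n = n - m·A
  have htot : ∑ r ∈ Finset.Icc 1 m, (cnt x r n : ℤ) = (n : ℤ) := by
    have hcard : (Finset.Icc 1 n).card = ∑ r ∈ Finset.Icc 1 m, cnt x r n := by
      apply Finset.card_eq_sum_card_fiberwise
      intro i hi
      rw [Finset.mem_coe, Finset.mem_Icc] at hi
      exact hx i hi.1 hi.2
    have hn : (Finset.Icc 1 n).card = n := by rw [Nat.card_Icc]; omega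
    have h2 : ∑ r ∈ Finset.Icc 1 m, cnt x r n = n := by rw [← hcard, hn]
    have h3 := congrArg (Nat.cast : ℕ → ℤ) h2
    push_cast at h3
    exact h3
  have habel : ∑ r ∈ Finset.Icc 1 (m - 1), (r : ℤ) * Scnt x r n = (n : ℤ) - (m : ℤ) * A := by
    have h := abelsum (fun r => (cnt x r n : ℤ)) (m - 1)
    rw [hm1] at h
    have hcast : ((m - 1 : ℕ) : ℤ) + 1 = (m : ℤ) := by omega
    rw [hcast, htot] at h
    calc ∑ r ∈ Finset.Icc 1 (m - 1), (r : ℤ) * Scnt x r n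
        = ∑ r ∈ Finset.Icc 1 (m - 1), (r : ℤ) * ((cnt x r n : ℤ) - (cnt x (r + 1) n : ℤ)) := rfl
      _ = (n : ℤ) - (m : ℤ) * A := by rw [h, hA]
  -- finish in ℚ
  rw [hsup]
  have hmQ : (m : ℚ) ≠ 0 := by positivity
  have hSQ : ∑ r ∈ Finset.Icc 1 (m - 1), (r : ℚ) * (Scnt x r n : ℚ)
      = ((∑ r ∈ Finset.Icc 1 (m - 1), (r : ℤ) * Scnt x r n : ℤ) : ℚ) := by
    push_cast
    ring
  rw [hSQ, habel]
  push_cast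
  field_simp
  ring
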